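/- Let m ≥ 1, let P be a positive definite real m×m matrix, let Θ be an invertible real m×m matrix, let K₀ > 0, and let y, w : ℝ → ℝ^m be functions. Define ȳ(t) = Θ·(y(t) - w(t)). Suppose F : ℝ → ℝ is differentiable with continuous derivative, F is bounded from below on [0,∞), its derivative satisfies F'(t) = -2K₀ · (ȳ(t)ᵀ P ȳ(t)) for all t ≥ 0, and the function t ↦ ȳ(t)ᵀ P ȳ(t) has bounded variation on [0,∞). Then y(t) - w(t) → 0 as t → ∞. -/

import Mathlib

/-!
Since `F' = -2K₀ q` with `q(t) = ȳᵀPȳ ≥ 0`, and `q` has bounded variation on `[0, ∞)`, `q` has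
a limit `L ≥ 0`. If `L > 0`, then `F' ≤ -K₀L` eventually, so `F` decreases at least linearly,
contradicting that it is bounded below; hence `q → 0`. Writing `P = BᵀB` with `B` invertible
gives `q = |Bȳ|²`, so `ȳ → 0`, and finally `y - w = Θ⁻¹ȳ → 0`.
-/

open Filter Topology Matrix

theorem tendsto_atBot_of_eventually_deriv_le_neg {F : ℝ → ℝ} (hF : Differentiable ℝ F) {ε : ℝ}
    (hε : 0 < ε) (h : ∀ᶠ t in atTop, deriv F t ≤ -ε) : Tendsto F atTop atBot := by
  obtain ⟨T, hT⟩ := eventually_atTop.1 h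
  have hlin : Tendsto (fun t => F T + ε * T + -ε * t) atTop atBot :=
    tendsto_atBot_add_const_left _ _ (tendsto_id.const_mul_atTop_of_neg (neg_neg_of_pos hε))
  refine tendsto_atBot_mono' atTop ?_ hlin
  filter_upwards [eventually_ge_atTop T] with t ht
  have := (convex_Ici T).image_sub_le_mul_sub_of_deriv_le hF.continuous.continuousOn
    hF.differentiableOn (fun x hx => hT x (interior_subset hx)) T (Set.mem_Ici.2 le_rfl) t ht ht
  linarith

theorem nonneg_of_tendsto_deriv_of_bddBelow {F : ℝ → ℝ} (hF : Differentiable ℝ F) {a : ℝ}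
    (h : Tendsto (deriv F) atTop (𝓝 a)) {s : Set ℝ} (hs : s ∈ atTop) (hbd : BddBelow (F '' s)) :
    0 ≤ a := by
  by_contra! ha
  obtain ⟨b, hb⟩ := hbd
  have hF_atBot := tendsto_atBot_of_eventually_deriv_le_neg hF (show 0 < -(a / 2) by linarith)
    (h.eventually (eventually_le_nhds (show a < -(-(a / 2)) by linarith)))
  obtain ⟨t, hFt, ht⟩ := ((hF_atBot.eventually (eventually_lt_atBot b)).and hs).exists
  exact hFt.not_ge (hb ⟨t, ht, rfl⟩)

section TendstoZero

variable {ι α : Type*} [Fintype ι] {l : Filter α}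

theorem Matrix.tendsto_zero_of_tendsto_mulVec {R : Type*} [DecidableEq ι] [CommRing R]
    [TopologicalSpace R] [IsTopologicalRing R] {A : Matrix ι ι R} (hA : IsUnit A.det)
    {x : α → ι → R} (h : Tendsto (fun a => A *ᵥ x a) l (𝓝 0)) : Tendsto x l (𝓝 0) := by
  have hcont : Continuous (A⁻¹ *ᵥ · : (ι → R) → ι → R) :=
    continuous_const.matrix_mulVec continuous_id
  simpa [Function.comp_def, mulVec_mulVec, nonsing_inv_mul A hA] using (hcont.tendsto 0).comp h

theorem tendsto_zero_of_tendsto_dotProduct_self {v : α → ι → ℝ}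
    (h : Tendsto (fun a => v a ⬝ᵥ v a) l (𝓝 0)) : Tendsto v l (𝓝 0) := by
  have hnorm_eq : ∀ a, ‖(WithLp.toLp 2 (v a) : EuclideanSpace ℝ ι)‖ = √(v a ⬝ᵥ v a) := fun a => by
    rw [norm_eq_sqrt_real_inner (F := EuclideanSpace ℝ ι), EuclideanSpace.inner_toLp_toLp,
      star_trivial]
  have hnorm : Tendsto (fun a => ‖(WithLp.toLp 2 (v a) : EuclideanSpace ℝ ι)‖) l (𝓝 0) := by
    simpa [hnorm_eq] using h.sqrt
  simpa [Function.comp_def] using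
    ((PiLp.continuous_ofLp 2 _).tendsto 0).comp (tendsto_zero_iff_norm_tendsto_zero.2 hnorm)

theorem Matrix.PosDef.tendsto_zero_of_tendsto_dotProduct_mulVec [DecidableEq ι]
    {P : Matrix ι ι ℝ} (hP : P.PosDef) {x : α → ι → ℝ}
    (h : Tendsto (fun a => x a ⬝ᵥ P *ᵥ x a) l (𝓝 0)) : Tendsto x l (𝓝 0) := by
  open scoped MatrixOrder in
  obtain ⟨B, rfl⟩ := CStarAlgebra.nonneg_iff_eq_star_mul_self.mp hP.posSemidef.nonneg
  have hB : IsUnit B.det := by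
    have := (isUnit_iff_isUnit_det _).1 hP.isUnit
    rw [det_mul] at this
    exact (IsUnit.mul_iff.1 this).2
  have hquad : ∀ v, v ⬝ᵥ (star B * B) *ᵥ v = B *ᵥ v ⬝ᵥ B *ᵥ v := fun v => by
    rw [star_eq_conjTranspose, conjTranspose_eq_transpose_of_trivial, ← mulVec_mulVec,
      dotProduct_mulVec, vecMul_transpose]
  simp only [hquad] at h
  exact tendsto_zero_of_tendsto_mulVec hB (tendsto_zero_of_tendsto_dotProduct_self h)

end TendstoZero

theorem stmt3_general (m : ℕ)
    (P Θ : Matrix (Fin m) (Fin m) ℝ) (hP : P.PosDef) (hΘ : IsUnit Θ.det)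
    (K₀ : ℝ) (hK : 0 < K₀)
    (y w : ℝ → Fin m → ℝ)
    (ybar : ℝ → Fin m → ℝ) (hybar : ∀ t, ybar t = Θ.mulVec (y t - w t))
    (F : ℝ → ℝ) (hF : Differentiable ℝ F)
    (hbd : BddBelow (F '' Set.Ici 0))
    (hderiv : ∀ t ≥ (0 : ℝ), deriv F t = -2 * K₀ * (ybar t ⬝ᵥ P.mulVec (ybar t)))
    (hbv : BoundedVariationOn (fun t => ybar t ⬝ᵥ P.mulVec (ybar t)) (Set.Ici 0)) :
    Filter.Tendsto (fun t => y t - w t) Filter.atTop (nhds 0) := by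
  obtain ⟨L, hL⟩ := hbv.exists_tendsto_atTop
  rw [inf_eq_right.2 (le_principal_iff.2 (Ici_mem_atTop 0))] at hL
  have hL_nonneg : 0 ≤ L := ge_of_tendsto' hL fun t => by
    simpa using hP.posSemidef.dotProduct_mulVec_nonneg (ybar t)
  have hderiv_tendsto : Tendsto (deriv F) atTop (𝓝 (-2 * K₀ * L)) :=
    (hL.const_mul _).congr' <| (eventually_ge_atTop 0).mono fun t ht => (hderiv t ht).symm
  have hL_zero : L = 0 := by
    nlinarith [nonneg_of_tendsto_deriv_of_bddBelow hF hderiv_tendsto (Ici_mem_atTop 0) hbd]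
  have hybar_tendsto : Tendsto ybar atTop (𝓝 0) :=
    hP.tendsto_zero_of_tendsto_dotProduct_mulVec (hL_zero ▸ hL)
  exact tendsto_zero_of_tendsto_mulVec hΘ (by simpa only [← hybar] using hybar_tendsto)

/-- Analytic content of Corollary 1: under the control law the controllers
asymptotically track the optimal placement, i.e. `y(t) - w(t) → 0`. -/
theorem stmt3 (m : ℕ) (hm : 1 ≤ m)
    (P Θ : Matrix (Fin m) (Fin m) ℝ) (hP : P.PosDef) (hΘ : IsUnit Θ.det)
    (K₀ : ℝ) (hK : 0 < K₀)
    (y w : ℝ → Fin m → ℝ)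
    (ybar : ℝ → Fin m → ℝ) (hybar : ∀ t, ybar t = Θ.mulVec (y t - w t))
    (F : ℝ → ℝ) (hF : Differentiable ℝ F) (hFc : Continuous (deriv F))
    (hbd : BddBelow (F '' Set.Ici 0))
    (hderiv : ∀ t ≥ (0 : ℝ), deriv F t = -2 * K₀ * (ybar t ⬝ᵥ P.mulVec (ybar t)))
    (hbv : BoundedVariationOn (fun t => ybar t ⬝ᵥ P.mulVec (ybar t)) (Set.Ici 0)) :
    Filter.Tendsto (fun t => y t - w t) Filter.atTop (nhds 0) :=
  stmt3_general m P Θ hP hΘ K₀ hK y w ybar hybar F hF hbd hderiv hbv
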